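/- arXiv:1504.00134 — 2 statements merged into one kernel-verified Lean document; each statement's English description precedes it below -/
import Mathlib

section
/- Let (C_n)_{n∈ℕ} be finite nonempty linearly ordered sets and for m ≥ n let π_{m,n} : C_m → C_n be monotone surjections forming an inverse system. Then the inverse limit C = {x ∈ ∏ C_n : π_{m,n}(x_m) = x_n} with the coordinatewise-induced order (x ≤ y iff x_n ≤ y_n for all n, equivalently the lexicographic comparison) is a complete linear order. -/
/-!
The coordinatewise order is total: if `y i < x i` for some `i`, then `y j ≤ x j` for `j ≤ i` by
pushing that inequality down, and for `j ≥ i` because `x j < y j` would push down to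
`x i ≤ y i`. The coordinatewise supremum of a nonempty family is again compatible, since in each
finite chain it is attained by a member of the family; adjoining the bottom sequence (compatible
because monotone surjections preserve `⊥`) handles the empty family.
-/

theorem Monotone.map_bot_of_surjective {α β : Type*} [Preorder α] [OrderBot α] [PartialOrder β]
    [OrderBot β] {f : α → β} (hf : Monotone f) (hs : Function.Surjective f) : f ⊥ = ⊥ := by
  obtain ⟨a, ha⟩ := hs ⊥
  exact le_bot_iff.mp (ha ▸ hf bot_le)

abbrev InverseLimit {ι : Type*} [LE ι] {C : ι → Type*} (π : ∀ i j, j ≤ i → C i → C j) :=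
  {x : ∀ i, C i // ∀ i j (h : j ≤ i), π i j h (x i) = x j}

namespace InverseLimit

variable {ι : Type*} {C : ι → Type*}

section CompleteLattice

variable [LE ι] {π : ∀ i j, j ≤ i → C i → C j} [∀ i, CompleteLinearOrder (C i)]

def bot (hmono : ∀ i j (h : j ≤ i), Monotone (π i j h))
    (hsurj : ∀ i j (h : j ≤ i), Function.Surjective (π i j h)) : InverseLimit π :=
  ⟨fun _ => ⊥, fun i j h => (hmono i j h).map_bot_of_surjective (hsurj i j h)⟩

theorem map_sSup_image_eval [∀ i, Finite (C i)] (hmono : ∀ i j (h : j ≤ i), Monotone (π i j h))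
    {S : Set (InverseLimit π)} (hS : S.Nonempty) {i j : ι} (h : j ≤ i) :
    π i j h (sSup ((fun x => x.1 i) '' S)) = sSup ((fun x => x.1 j) '' S) := by
  obtain ⟨x, hx, hxi⟩ := (hS.image (fun x : InverseLimit π => x.1 i)).csSup_mem (Set.toFinite _)
  refine le_antisymm ?_ (sSup_le ?_)
  · rw [← hxi, x.2 i j h]
    exact le_sSup ⟨x, hx, rfl⟩
  · rintro _ ⟨y, hy, rfl⟩
    show y.1 j ≤ _
    rw [← y.2 i j h]
    exact hmono i j h (le_sSup ⟨y, hy, rfl⟩)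

variable [∀ i, Finite (C i)] (hmono : ∀ i j (h : j ≤ i), Monotone (π i j h))
  (hsurj : ∀ i j (h : j ≤ i), Function.Surjective (π i j h))

protected def sSup (S : Set (InverseLimit π)) : InverseLimit π :=
  ⟨fun i => sSup ((fun x => x.1 i) '' insert (bot hmono hsurj) S),
    fun _ _ h => map_sSup_image_eval hmono (Set.insert_nonempty _ _) h⟩

theorem isLUB_sSup (S : Set (InverseLimit π)) : IsLUB S (InverseLimit.sSup hmono hsurj S) := by
  refine ⟨fun x hx i => le_sSup ⟨x, Set.mem_insert_of_mem _ hx, rfl⟩, fun u hu i => sSup_le ?_⟩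
  rintro _ ⟨x, hx | hx, rfl⟩
  · exact hx ▸ bot_le
  · exact hu hx i

end CompleteLattice

section LinearOrder

variable [LinearOrder ι] {π : ∀ i j, j ≤ i → C i → C j}

theorem le_total_of_monotone [∀ i, LinearOrder (C i)]
    (hmono : ∀ i j (h : j ≤ i), Monotone (π i j h)) (x y : InverseLimit π) :
    x ≤ y ∨ y ≤ x := by
  refine or_iff_not_imp_left.mpr fun hxy => ?_
  obtain ⟨i, hi⟩ : ∃ i, y.1 i < x.1 i := by
    simpa [← Subtype.coe_le_coe, Pi.le_def] using hxy
  intro j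
  rcases le_total j i with hji | hij
  · rw [← x.2 i j hji, ← y.2 i j hji]
    exact hmono i j hji hi.le
  · by_contra! hj
    have := hmono j i hij hj.le
    rw [x.2 j i hij, y.2 j i hij] at this
    exact this.not_gt hi

noncomputable abbrev completeLinearOrder [∀ i, CompleteLinearOrder (C i)]
    [∀ i, Finite (C i)] (hmono : ∀ i j (h : j ≤ i), Monotone (π i j h))
    (hsurj : ∀ i j (h : j ≤ i), Function.Surjective (π i j h)) :
    CompleteLinearOrder (InverseLimit π) :=
  letI : SupSet (InverseLimit π) := ⟨InverseLimit.sSup hmono hsurj⟩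
  letI : CompleteLattice (InverseLimit π) := completeLatticeOfSup _ (isLUB_sSup hmono hsurj)
  haveI : Std.Total (α := InverseLimit π) (· ≤ ·) := ⟨le_total_of_monotone hmono⟩
  letI := Classical.decRel (α := InverseLimit π) (· ≤ ·)
  letI := Classical.decRel (α := InverseLimit π) (· < ·)
  letI := Classical.decEq (InverseLimit π)
  letI := Lattice.toLinearOrder (InverseLimit π)
  { this, ‹CompleteLattice (InverseLimit π)›, LinearOrder.toBiheytingAlgebra (InverseLimit π) with }

end LinearOrder

end InverseLimit

theorem stmt_10_general (C : ℕ → Type*) [∀ n, Fintype (C n)] [∀ n, Nonempty (C n)]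
    [∀ n, LinearOrder (C n)]
    (π : ∀ m n, n ≤ m → C m → C n)
    (hmono : ∀ m n (h : n ≤ m), Monotone (π m n h))
    (hsurj : ∀ m n (h : n ≤ m), Function.Surjective (π m n h)) :
    ∃ inst : CompleteLinearOrder
        {x : ∀ n, C n // ∀ m n (h : n ≤ m), π m n h (x m) = x n},
      ∀ x y : {x : ∀ n, C n // ∀ m n (h : n ≤ m), π m n h (x m) = x n},
        (letI := inst; x ≤ y) ↔ ∀ n, x.1 n ≤ y.1 n := by
  let := fun n => Fintype.toCompleteLinearOrderOfNonempty (C n)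
  exact ⟨InverseLimit.completeLinearOrder hmono hsurj, fun _ _ => Iff.rfl⟩

/-- The inverse limit of an inverse system of finite nonempty linearly ordered sets with
monotone surjective bonding maps is a complete linear order (with the coordinatewise
order). -/
theorem stmt_10 (C : ℕ → Type*) [∀ n, Fintype (C n)] [∀ n, Nonempty (C n)]
    [∀ n, LinearOrder (C n)]
    (π : ∀ m n, n ≤ m → C m → C n)
    (hmono : ∀ m n (h : n ≤ m), Monotone (π m n h))
    (hsurj : ∀ m n (h : n ≤ m), Function.Surjective (π m n h))
    (hid : ∀ n (x : C n), π n n le_rfl x = x)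
    (hcomp : ∀ k m n (h1 : n ≤ m) (h2 : m ≤ k) (x : C k),
      π m n h1 (π k m h2 x) = π k n (h1.trans h2) x) :
    ∃ inst : CompleteLinearOrder
        {x : ∀ n, C n // ∀ m n (h : n ≤ m), π m n h (x m) = x n},
      ∀ x y : {x : ∀ n, C n // ∀ m n (h : n ≤ m), π m n h (x m) = x n},
        (letI := inst; x ≤ y) ↔ ∀ n, x.1 n ≤ y.1 n :=
  stmt_10_general C π hmono hsurj
end

section
/- Let C = ∏_{i≥1} {0,...,n_i−1} with n_i ≥ 2, lexicographic order, and φ(x) = Σ x_i/(n_1⋯n_i). For any a ≤ b in C which depend only on the first n coordinates (i.e., a, b ∈ C_n := ∏_{i≤n}{0,...,n_i−1} extended by zeros), the cylinder/interval [a, b'] (where b' is the supremum of elements strictly below the successor determined by b) satisfies λ(φ([a,b'])) = |[a,b]_{C_n}| / |C_n|, where λ is Lebesgue measure and |[a,b]_{C_n}| is the number of elements of C_n between a and b in lexicographic order. -/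
/-!
Write `D m = n 0 * ⋯ * n (m - 1)`. An element supported on the first `N` coordinates is a
mixed-radix numeral, and `φ` sends it to `k / D N`, where `k = natValue N x` is its value read in
Horner form; `natValue N` is strictly monotone for the lexicographic order, so the elements of
`[a, b]_{C_N}` correspond to the integers in `[natValue N a, natValue N b]`. On all of `C`, the
digits beyond position `m` contribute at most `1 / D m` (a telescoping sum), which makes `φ`
lexicographically monotone, and equal to exactly `1 / D N` for `b'`. The greedy digit expansion
shows that `φ` maps onto `[0, 1)`, so `φ` maps `[a, b']` onto the real interval
`[natValue N a / D N, (natValue N b + 1) / D N]`.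
-/

open MeasureTheory
open scoped BigOperators
open Filter Topology Finset

theorem Monotone.image_Icc_eq_of_Ico_subset_range {α β : Type*} [LinearOrder α]
    [PartialOrder β] {f : α → β} (hf : Monotone f) {a b : α} (hab : a ≤ b)
    (hrange : Set.Ico (f a) (f b) ⊆ Set.range f) : f '' Set.Icc a b = Set.Icc (f a) (f b) := by
  refine hf.image_Icc_subset.antisymm fun y ⟨hay, hyb⟩ => ?_
  rcases hyb.eq_or_lt with rfl | hyb
  · exact ⟨b, ⟨hab, le_rfl⟩, rfl⟩
  obtain ⟨x, rfl⟩ := hrange ⟨hay, hyb⟩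
  rcases lt_or_ge x a with hxa | hax
  · exact ⟨a, ⟨le_rfl, hab⟩, (hf hxa.le).antisymm' hay⟩
  · exact ⟨x, ⟨hax, (hf.reflect_lt hyb).le⟩, rfl⟩

theorem toLex_le_toLex_iff_eq_or_lex {ι : Type*} [LinearOrder ι] {β : ι → Type*}
    [∀ i, PartialOrder (β i)] {x y : ∀ i, β i} :
    toLex x ≤ toLex y ↔ x = y ∨ Pi.Lex (· < ·) (fun {_} => (· < ·)) x y :=
  le_iff_eq_or_lt

theorem hasSum_sub_succ_of_tendsto {f : ℕ → ℝ} {l : ℝ} (hf : Antitone f)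
    (hl : Tendsto f atTop (𝓝 l)) : HasSum (fun i => f i - f (i + 1)) (f 0 - l) := by
  refine (hasSum_iff_tendsto_nat_of_nonneg (fun i => sub_nonneg.2 (hf i.le_succ)) _).2 ?_
  simpa only [Finset.sum_range_sub'] using tendsto_const_nhds.sub hl

namespace MixedRadix

variable {n : ℕ → ℕ}

noncomputable def denom (n : ℕ → ℕ) (m : ℕ) : ℝ := ∏ j ∈ range m, (n j : ℝ)

theorem denom_zero : denom n 0 = 1 := prod_range_zero _

theorem denom_succ (m : ℕ) : denom n (m + 1) = denom n m * n m := prod_range_succ _ _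

theorem denom_eq_natCast_prod (m : ℕ) : denom n m = ((∏ j ∈ range m, n j : ℕ) : ℝ) := by
  rw [denom, Nat.cast_prod]

theorem tendsto_denom_atTop (hn : ∀ i, 2 ≤ n i) : Tendsto (denom n) atTop atTop := by
  refine tendsto_atTop_mono (fun m => ?_) (tendsto_pow_atTop_atTop_of_one_lt one_lt_two)
  simpa [denom] using prod_le_prod (s := range m) (f := fun _ => (2 : ℝ)) (fun _ _ => zero_le_two)
    (fun j _ => (by exact_mod_cast hn j : (2 : ℝ) ≤ n j))

def natValue (n : ℕ → ℕ) : ℕ → (∀ i, Fin (n i)) → ℕ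
  | 0, _ => 0
  | m + 1, x => natValue n m x * n m + x m

theorem natValue_congr {m : ℕ} {x y : ∀ i, Fin (n i)} (h : ∀ i < m, x i = y i) :
    natValue n m x = natValue n m y := by
  induction m with
  | zero => rfl
  | succ m ih =>
    simp only [natValue, ih fun i hi => h i (hi.trans m.lt_succ_self), h m m.lt_succ_self]

theorem natValue_lt_prod (x : ∀ i, Fin (n i)) (m : ℕ) :
    natValue n m x < ∏ i ∈ range m, n i := by
  induction m with
  | zero => simp [natValue]
  | succ m ih =>
    rw [natValue, prod_range_succ]
    calc natValue n m x * n m + x m < (natValue n m x + 1) * n m := by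
          have := (x m).isLt; rw [add_one_mul]; omega
      _ ≤ (∏ i ∈ range m, n i) * n m := Nat.mul_le_mul_right _ ih

theorem natValue_lt_natValue {i m : ℕ} {x y : ∀ i, Fin (n i)} (hxy : ∀ j < i, x j = y j)
    (hi : x i < y i) (him : i < m) : natValue n m x < natValue n m y := by
  induction m, him using Nat.le_induction with
  | base =>
    rw [natValue, natValue, natValue_congr hxy]
    exact Nat.add_lt_add_left hi _
  | succ m _ ih =>
    rw [natValue, natValue]
    calc natValue n m x * n m + x m < (natValue n m x + 1) * n m := by
          have := (x m).isLt; rw [add_one_mul]; omega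
      _ ≤ natValue n m y * n m := Nat.mul_le_mul_right _ ih
      _ ≤ natValue n m y * n m + y m := Nat.le_add_right _ _

theorem natValue_lt_natValue_of_toLex_lt {N : ℕ} {x y : ∀ i, Fin (n i)}
    (hx : ∀ i, N ≤ i → (x i : ℕ) = 0) (hy : ∀ i, N ≤ i → (y i : ℕ) = 0)
    (h : toLex x < toLex y) : natValue n N x < natValue n N y := by
  obtain ⟨i, hxy, hi⟩ := h
  refine natValue_lt_natValue hxy hi (lt_of_not_ge fun hNi => ?_)
  have : (x i : ℕ) < y i := hi
  have := hx i hNi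
  have := hy i hNi
  omega

theorem natValue_le_natValue_iff {N : ℕ} {x y : ∀ i, Fin (n i)}
    (hx : ∀ i, N ≤ i → (x i : ℕ) = 0) (hy : ∀ i, N ≤ i → (y i : ℕ) = 0) :
    natValue n N x ≤ natValue n N y ↔ toLex x ≤ toLex y := by
  refine ⟨fun h => not_lt.1 fun hyx => (natValue_lt_natValue_of_toLex_lt hy hx hyx).not_ge h,
    fun h => ?_⟩
  rcases h.eq_or_lt with h | h
  · rw [toLex.injective h]
  · exact (natValue_lt_natValue_of_toLex_lt hx hy h).le

noncomputable def term (n : ℕ → ℕ) (x : ∀ i, Fin (n i)) (i : ℕ) : ℝ :=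
  (x i : ℝ) / denom n (i + 1)

noncomputable def value (n : ℕ → ℕ) (x : ∀ i, Fin (n i)) : ℝ := ∑' i, term n x i

theorem term_nonneg {x : ∀ i, Fin (n i)} {i : ℕ} : 0 ≤ term n x i := by
  unfold term denom; positivity

theorem value_nonneg (x : ∀ i, Fin (n i)) : 0 ≤ value n x :=
  tsum_nonneg fun _ => term_nonneg

variable [∀ i, NeZero (n i)]

theorem denom_pos (m : ℕ) : 0 < denom n m :=
  prod_pos fun j _ => Nat.cast_pos.2 (NeZero.pos (n j))

theorem inv_denom_sub_inv_denom_succ (m : ℕ) :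
    (denom n m)⁻¹ - (denom n (m + 1))⁻¹ = ((n m : ℝ) - 1) / denom n (m + 1) := by
  have := denom_pos (n := n) m
  have : (0 : ℝ) < n m := Nat.cast_pos.2 (NeZero.pos (n m))
  rw [denom_succ]
  field_simp

theorem term_le {x : ∀ i, Fin (n i)} {i : ℕ} :
    term n x i ≤ (denom n i)⁻¹ - (denom n (i + 1))⁻¹ := by
  rw [inv_denom_sub_inv_denom_succ, term]
  have := denom_pos (n := n) (i + 1)
  have : (x i : ℕ) + 1 ≤ n i := (x i).isLt
  gcongr
  exact le_sub_iff_add_le.2 (by exact_mod_cast this)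

theorem term_eq_of_val_eq_sub_one {x : ∀ i, Fin (n i)} {i : ℕ} (h : (x i : ℕ) = n i - 1) :
    term n x i = (denom n i)⁻¹ - (denom n (i + 1))⁻¹ := by
  rw [inv_denom_sub_inv_denom_succ, term, h, Nat.cast_sub NeZero.one_le, Nat.cast_one]

theorem sum_range_term (x : ∀ i, Fin (n i)) (m : ℕ) :
    ∑ i ∈ range m, term n x i = natValue n m x / denom n m := by
  induction m with
  | zero => simp [natValue]
  | succ m ih =>
    have := denom_pos (n := n) m
    have : (0 : ℝ) < n m := Nat.cast_pos.2 (NeZero.pos (n m))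
    rw [sum_range_succ, ih, term, natValue, denom_succ]
    push_cast
    field_simp

theorem hasSum_inv_denom_sub (hD : Tendsto (denom n) atTop atTop) (m : ℕ) :
    HasSum (fun j => (denom n (j + m))⁻¹ - (denom n (j + m + 1))⁻¹) (denom n m)⁻¹ := by
  have hanti : Antitone fun j => (denom n (j + m))⁻¹ := by
    refine antitone_nat_of_succ_le fun j => inv_anti₀ (denom_pos _) ?_
    rw [add_right_comm, denom_succ]
    exact le_mul_of_one_le_right (denom_pos _).le (Nat.one_le_cast.2 NeZero.one_le)
  simpa [add_right_comm] using hasSum_sub_succ_of_tendsto hanti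
    (tendsto_inv_atTop_zero.comp ((tendsto_add_atTop_iff_nat m).2 hD))

theorem summable_term (hD : Tendsto (denom n) atTop atTop) (x : ∀ i, Fin (n i)) :
    Summable (term n x) :=
  Summable.of_nonneg_of_le (fun _ => term_nonneg) (fun _ => term_le)
    (by simpa using (hasSum_inv_denom_sub hD 0).summable)

theorem value_eq_add_tsum (hD : Tendsto (denom n) atTop atTop) (x : ∀ i, Fin (n i)) (m : ℕ) :
    value n x = natValue n m x / denom n m + ∑' j, term n x (j + m) := by
  rw [← sum_range_term, value, (summable_term hD x).sum_add_tsum_nat_add]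

theorem tsum_term_add_le (hD : Tendsto (denom n) atTop atTop) (x : ∀ i, Fin (n i)) (m : ℕ) :
    ∑' j, term n x (j + m) ≤ (denom n m)⁻¹ :=
  hasSum_le (fun _ => term_le) ((summable_nat_add_iff m).2 (summable_term hD x)).hasSum
    (hasSum_inv_denom_sub hD m)

theorem tsum_term_add_of_val_eq_sub_one (hD : Tendsto (denom n) atTop atTop) {m : ℕ}
    {x : ∀ i, Fin (n i)} (hx : ∀ i, m ≤ i → (x i : ℕ) = n i - 1) :
    ∑' j, term n x (j + m) = (denom n m)⁻¹ := by
  rw [← (hasSum_inv_denom_sub hD m).tsum_eq]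
  exact tsum_congr fun j => term_eq_of_val_eq_sub_one (hx _ (Nat.le_add_left m j))

theorem value_eq_natValue_div (hD : Tendsto (denom n) atTop atTop) {N : ℕ}
    {x : ∀ i, Fin (n i)} (hx : ∀ i, N ≤ i → (x i : ℕ) = 0) :
    value n x = natValue n N x / denom n N := by
  have htail : ∀ j, term n x (j + N) = 0 := fun j => by
    simp [term, hx (j + N) (Nat.le_add_left N j)]
  simp [value_eq_add_tsum hD x N, htail]

theorem value_le_one (hD : Tendsto (denom n) atTop atTop) (x : ∀ i, Fin (n i)) :
    value n x ≤ 1 := by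
  simpa [value_eq_add_tsum hD x 0, natValue, denom_zero] using tsum_term_add_le hD x 0

theorem monotone_value (hD : Tendsto (denom n) atTop atTop) :
    Monotone fun x : Lex (∀ i, Fin (n i)) => value n (ofLex x) := by
  intro x y hxy
  obtain rfl | ⟨i, hxy, hi⟩ := hxy.eq_or_lt
  · exact le_rfl
  have hnat : natValue n (i + 1) (ofLex x) + 1 ≤ natValue n (i + 1) (ofLex y) :=
    natValue_lt_natValue hxy hi i.lt_succ_self
  have := denom_pos (n := n) (i + 1)
  calc value n (ofLex x)
      ≤ natValue n (i + 1) (ofLex x) / denom n (i + 1) + (denom n (i + 1))⁻¹ := by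
        rw [value_eq_add_tsum hD _ (i + 1)]
        gcongr
        exact tsum_term_add_le hD _ _
    _ = ((natValue n (i + 1) (ofLex x) + 1 : ℕ) : ℝ) / denom n (i + 1) := by
        push_cast; ring
    _ ≤ natValue n (i + 1) (ofLex y) / denom n (i + 1) := by gcongr
    _ ≤ value n (ofLex y) := by
        rw [value_eq_add_tsum hD _ (i + 1)]
        exact le_add_of_nonneg_right (tsum_nonneg fun _ => term_nonneg)

noncomputable def digits (y : ℝ) : ∀ i, Fin (n i) :=
  fun i => ⟨⌊y * denom n (i + 1)⌋₊ % n i, Nat.mod_lt _ (NeZero.pos _)⟩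

theorem natValue_digits {y : ℝ} (hy : y < 1) (m : ℕ) :
    natValue n m (digits y) = ⌊y * denom n m⌋₊ := by
  induction m with
  | zero => simp [natValue, denom_zero, Nat.floor_eq_zero.2 hy]
  | succ m ih =>
    have : (n m : ℝ) ≠ 0 := Nat.cast_ne_zero.2 (NeZero.ne _)
    have hfloor : ⌊y * denom n m⌋₊ = ⌊y * denom n (m + 1)⌋₊ / n m := by
      rw [← Nat.floor_div_natCast, denom_succ]
      field_simp
    rw [natValue, ih, hfloor]
    exact Nat.div_add_mod' _ _

theorem value_digits (hD : Tendsto (denom n) atTop atTop) {y : ℝ} (hy₀ : 0 ≤ y)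
    (hy₁ : y < 1) :
    value n (digits y) = y := by
  refine tendsto_nhds_unique (summable_term hD _).hasSum.tendsto_sum_nat ?_
  simp_rw [sum_range_term, natValue_digits hy₁]
  exact (tendsto_nat_floor_mul_div_atTop hy₀).comp hD

theorem digits_natCast_div_denom_eq_zero (k N : ℕ) :
    ∀ i, N ≤ i → (digits (n := n) ((k : ℝ) / denom n N) i : ℕ) = 0 := by
  intro i hi
  have := denom_pos (n := n) N
  have hk : (k : ℝ) / denom n N * denom n (i + 1) =
      ((k * ∏ j ∈ Ico N (i + 1), n j : ℕ) : ℝ) := by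
    have hsplit : denom n (i + 1) = denom n N * ∏ j ∈ Ico N (i + 1), (n j : ℝ) :=
      (prod_range_mul_prod_Ico _ (by omega)).symm
    rw [hsplit]
    push_cast
    field_simp
  change ⌊_⌋₊ % n i = 0
  rw [hk, Nat.floor_natCast]
  exact Nat.mod_eq_zero_of_dvd
    (dvd_mul_of_dvd_right (dvd_prod_of_mem _ (mem_Ico.2 ⟨hi, i.lt_succ_self⟩)) k)

theorem card_supported_Icc {N : ℕ} {a b : ∀ i, Fin (n i)}
    (ha : ∀ i, N ≤ i → (a i : ℕ) = 0) (hb : ∀ i, N ≤ i → (b i : ℕ) = 0) :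
    Nat.card {x : ∀ i, Fin (n i) // (∀ i, N ≤ i → (x i : ℕ) = 0) ∧
      toLex a ≤ toLex x ∧ toLex x ≤ toLex b} = natValue n N b + 1 - natValue n N a := by
  set S := {x : ∀ i, Fin (n i) | (∀ i, N ≤ i → (x i : ℕ) = 0) ∧
    toLex a ≤ toLex x ∧ toLex x ≤ toLex b}
  have hinj : Set.InjOn (natValue n N) S := fun x hx y hy h =>
    toLex.injective (le_antisymm ((natValue_le_natValue_iff hx.1 hy.1).1 h.le)
      ((natValue_le_natValue_iff hy.1 hx.1).1 h.ge))
  have himage : natValue n N '' S = Set.Icc (natValue n N a) (natValue n N b) := by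
    ext k
    constructor
    · rintro ⟨x, ⟨hx, hax, hxb⟩, rfl⟩
      exact ⟨(natValue_le_natValue_iff ha hx).2 hax, (natValue_le_natValue_iff hx hb).2 hxb⟩
    · rintro ⟨hak, hkb⟩
      have hk : (k : ℝ) / denom n N < 1 := by
        rw [div_lt_one (denom_pos N), denom_eq_natCast_prod]
        exact_mod_cast hkb.trans_lt (natValue_lt_prod b N)
      have hxk : natValue n N (digits ((k : ℝ) / denom n N)) = k := by
        rw [natValue_digits hk, div_mul_cancel₀ _ (denom_pos N).ne', Nat.floor_natCast]
      have hx := digits_natCast_div_denom_eq_zero (n := n) k N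
      refine ⟨_, ⟨hx, (natValue_le_natValue_iff ha hx).1 (by rwa [hxk]),
        (natValue_le_natValue_iff hx hb).1 (by rwa [hxk])⟩, hxk⟩
  change Nat.card S = _
  rw [Nat.card_coe_set_eq, ← hinj.ncard_image, himage, Set.ncard_Icc_nat]

end MixedRadix

open MixedRadix in
/-- For `a ≤ b` in `C = ∏ i, Fin (n i)` depending only on the first `N` coordinates
(extended by zeros), the image under `φ` of the lexicographic interval `[a, b']` (where
`b'` agrees with `b` on the first `N` coordinates and is maximal afterwards) has Lebesgue
measure `|[a,b]_{C_N}| / |C_N|`. -/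
theorem stmt_15 (n : ℕ → ℕ) (hn : ∀ i, 2 ≤ n i) (N : ℕ)
    (φ : (∀ i, Fin (n i)) → ℝ)
    (hφ : ∀ x, φ x = ∑' i : ℕ, (x i : ℝ) / ∏ j ∈ Finset.range (i + 1), (n j : ℝ))
    (a b b' : ∀ i, Fin (n i))
    (ha : ∀ i, N ≤ i → (a i : ℕ) = 0)
    (hb : ∀ i, N ≤ i → (b i : ℕ) = 0)
    (hab : a = b ∨ Pi.Lex (· < ·) (fun {_} => (· < ·)) a b)
    (hb'lt : ∀ i, i < N → b' i = b i)
    (hb'ge : ∀ i, N ≤ i → (b' i : ℕ) = n i - 1) :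
    volume (φ '' {x | (a = x ∨ Pi.Lex (· < ·) (fun {_} => (· < ·)) a x) ∧
        (x = b' ∨ Pi.Lex (· < ·) (fun {_} => (· < ·)) x b')}) =
      (Nat.card {x : ∀ i, Fin (n i) // (∀ i, N ≤ i → (x i : ℕ) = 0) ∧
          (a = x ∨ Pi.Lex (· < ·) (fun {_} => (· < ·)) a x) ∧
          (x = b ∨ Pi.Lex (· < ·) (fun {_} => (· < ·)) x b)} : ENNReal) /
        ∏ i ∈ Finset.range N, (n i : ENNReal) := by
  obtain rfl : φ = value n := funext hφ
  have : ∀ i, NeZero (n i) := fun i => ⟨by have := hn i; omega⟩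
  have hD := tendsto_denom_atTop hn
  simp only [← toLex_le_toLex_iff_eq_or_lex] at hab ⊢
  have hbb' : toLex b < toLex b' := by
    refine ⟨N, fun j hj => (hb'lt j hj).symm, ?_⟩
    have := hn N
    change (b N : ℕ) < b' N
    rw [hb N le_rfl, hb'ge N le_rfl]
    omega
  have hvalue_b' : value n b' = (natValue n N b + 1) / denom n N := by
    rw [value_eq_add_tsum hD b' N, tsum_term_add_of_val_eq_sub_one hD hb'ge, natValue_congr hb'lt,
      add_div, one_div]
  have himage : value n '' {x | toLex a ≤ toLex x ∧ toLex x ≤ toLex b'} =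
      Set.Icc (value n a) (value n b') := by
    refine (monotone_value hD).image_Icc_eq_of_Ico_subset_range (hab.trans hbb'.le) ?_
    rintro y ⟨hay, hyb'⟩
    exact ⟨toLex (digits y), value_digits hD ((value_nonneg a).trans hay)
      (hyb'.trans_le (value_le_one hD b'))⟩
  have hka : natValue n N a ≤ natValue n N b + 1 :=
    ((natValue_le_natValue_iff ha hb).2 hab).trans (Nat.le_succ _)
  rw [himage, Real.volume_Icc, hvalue_b', value_eq_natValue_div hD ha, card_supported_Icc ha hb,
    ← sub_div, denom_eq_natCast_prod, ← Nat.cast_add_one, ← Nat.cast_sub hka,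
    ENNReal.ofReal_div_of_pos (by rw [← denom_eq_natCast_prod]; exact denom_pos N),
    ENNReal.ofReal_natCast, ENNReal.ofReal_natCast, Nat.cast_prod]
end
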